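/- For any r×c real payoff matrix M with entries in [0,1], any ε > 0, and any k ≥ ln(r)/(2ε²), there exists a multiset T of k columns (with repetition allowed) such that for every row i, the average (1/k)·Σ_{j∈T} M_{i,j} is at least v − ε, where v is the value of the game (which by the minimax theorem equals max_q min_i Σ_j q(j) M_{i,j}). -/

import Mathlib

/-!
Let `q` be an optimal mixed strategy of the column player, so that every row earns at least `v`
against `q`, and draw `k` columns independently according to `q`. By Hoeffding's inequality the
empirical average of a fixed row falls `ε` below its mean with probability at most
`exp (-2kε²) ≤ 1 / r`, so by the union bound some sample is good for all `r` rows at once.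
-/

open Finset MeasureTheory ProbabilityTheory Real

lemma measureReal_pi_mul_le_sum_integral_sub_le {α : Type*} [MeasurableSpace α] (ν : Measure α)
    [IsProbabilityMeasure ν] {f : α → ℝ} (hf : Measurable f)
    (hf01 : ∀ a, f a ∈ Set.Icc (0 : ℝ) 1) (k : ℕ) {s : ℝ} (hs : 0 ≤ s) :
    (Measure.pi fun _ : Fin k ↦ ν).real {x | k * s ≤ ∑ m, (ν[f] - f (x m))} ≤
      exp (-2 * k * s ^ 2) := by
  have h_indep : iIndepFun (fun m (x : Fin k → α) ↦ ν[f] - f (x m)) (Measure.pi fun _ ↦ ν) :=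
    iIndepFun_pi (X := fun _ a ↦ ν[f] - f a) fun _ ↦ (measurable_const.sub hf).aemeasurable
  have h_subG (m : Fin k) :
      HasSubgaussianMGF (fun x : Fin k → α ↦ ν[f] - f (x m)) (1 / 4) (Measure.pi fun _ ↦ ν) := by
    have h := (hasSubgaussianMGF_of_mem_Icc (μ := ν) hf.aemeasurable (ae_of_all _ hf01)).neg
    have h_eval := measurePreserving_eval (fun _ : Fin k ↦ ν) m
    have h_map : HasSubgaussianMGF (fun a ↦ ν[f] - f a) (1 / 4)
        ((Measure.pi fun _ ↦ ν).map (Function.eval m)) := by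
      rw [h_eval.map_eq]
      convert h using 1
      · ext a; simp
      · norm_num
    exact HasSubgaussianMGF.of_map (Y := Function.eval m) h_eval.measurable.aemeasurable h_map
  have h := HasSubgaussianMGF.measure_sum_ge_le_of_iIndepFun h_indep (s := univ)
    (fun m _ ↦ h_subG m) (by positivity : 0 ≤ k * s)
  refine h.trans_eq (congrArg exp ?_)
  rcases k.eq_zero_or_pos with rfl | hk
  · simp
  · simp only [sum_const, card_univ, Fintype.card_fin, nsmul_eq_mul]
    push_cast
    field_simp
    ring

lemma Finite.exists_pos_forall_exists_le {X ι : Type*} [Finite X] [Nonempty X] {g : X → ι → ℝ}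
    (h : ∀ x, ∃ i, 0 < g x i) : ∃ δ > 0, ∀ x, ∃ i, δ ≤ g x i := by
  choose i hi using h
  obtain ⟨x₀, hx₀⟩ := Finite.exists_min fun x ↦ g x (i x)
  exact ⟨_, hi x₀, fun x ↦ ⟨i x, hx₀ x⟩⟩

theorem exists_forall_mul_integral_sub_le_sum {ι κ : Type*} [Fintype ι] [Finite κ]
    [MeasurableSpace κ] [DiscreteMeasurableSpace κ] (ν : Measure κ) [IsProbabilityMeasure ν]
    {f : ι → κ → ℝ} (hf : ∀ i a, f i a ∈ Set.Icc (0 : ℝ) 1) {k : ℕ} (hk : 0 < k) {ε : ℝ}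
    (hε : 0 < ε) (hkε : Fintype.card ι * exp (-2 * k * ε ^ 2) ≤ 1) :
    ∃ x : Fin k → κ, ∀ i, k * (ν[f i] - ε) ≤ ∑ m, f i (x m) := by
  by_contra! h
  have := nonempty_of_isProbabilityMeasure ν
  have : Nonempty ι := (h (Classical.arbitrary _)).nonempty
  -- The sample space is finite, so every sample misses some row by a uniform margin `δ`;
  -- this makes the union bound below strict.
  obtain ⟨δ, hδ, hgap⟩ := Finite.exists_pos_forall_exists_le
    (g := fun x i ↦ k * (ν[f i] - ε) - ∑ m, f i (x m)) fun x ↦ (h x).imp fun _ ↦ sub_pos.2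
  have hk' : (0 : ℝ) < k := Nat.cast_pos.2 hk
  set μ := Measure.pi fun _ : Fin k ↦ ν
  set s := ε + δ / k
  have hs : ε < s := lt_add_of_pos_right ε (div_pos hδ hk')
  have hcover : Set.univ ⊆ ⋃ i, {x : Fin k → κ | k * s ≤ ∑ m, (ν[f i] - f i (x m))} := by
    intro x _
    obtain ⟨i, hi⟩ := hgap x
    refine Set.mem_iUnion.2 ⟨i, ?_⟩
    simp only [Set.mem_ofPred_eq, sum_sub_distrib, sum_const, card_univ, Fintype.card_fin,
      nsmul_eq_mul, s]
    field_simp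
    linarith
  have := calc
    (1 : ℝ) = μ.real Set.univ := probReal_univ.symm
    _ ≤ μ.real (⋃ i, {x : Fin k → κ | k * s ≤ ∑ m, (ν[f i] - f i (x m))}) :=
        measureReal_mono hcover
    _ ≤ ∑ i, μ.real {x : Fin k → κ | k * s ≤ ∑ m, (ν[f i] - f i (x m))} :=
        measureReal_iUnion_fintype_le _
    _ ≤ ∑ _i : ι, exp (-2 * k * s ^ 2) := sum_le_sum fun i _ ↦
        measureReal_pi_mul_le_sum_integral_sub_le ν .of_discrete (hf i) k (by positivity)
    _ < Fintype.card ι * exp (-2 * k * ε ^ 2) := by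
        rw [sum_const, card_univ, nsmul_eq_mul]
        refine mul_lt_mul_of_pos_left (exp_lt_exp.2 ?_) (Nat.cast_pos.2 Fintype.card_pos)
        have := mul_lt_mul_of_pos_left (pow_lt_pow_left₀ hs hε.le two_ne_zero) hk'
        linarith
  linarith

lemma exists_mem_stdSimplex_forall_iSup_le {ι κ : Type*} [Finite ι] [Fintype κ] [Nonempty κ]
    (M : ι → κ → ℝ) :
    ∃ q ∈ stdSimplex ℝ κ, ∀ i,
      (⨆ p : stdSimplex ℝ κ, ⨅ i', ∑ j, p.1 j * M i' j) ≤ ∑ j, q j * M i j := by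
  classical
  have hsemicont : UpperSemicontinuous fun p : κ → ℝ ↦ ⨅ i, ∑ j, p j * M i j :=
    upperSemicontinuous_ciInf (fun _ ↦ Finite.bddBelow_range _) fun i ↦
      (continuous_finsetSum _ fun j _ ↦ (continuous_apply j).mul continuous_const).upperSemicontinuous
  obtain ⟨q, hq, hmax⟩ := UpperSemicontinuousOn.exists_isMaxOn
    ⟨_, single_mem_stdSimplex ℝ (Classical.arbitrary κ)⟩ (isCompact_stdSimplex ℝ κ)
    (hsemicont.upperSemicontinuousOn _)
  exact ⟨q, hq, fun i ↦ (ciSup_le fun p ↦ hmax p.2).trans (ciInf_le (Finite.bddBelow_range _) i)⟩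

noncomputable def PMF.ofStdSimplex {κ : Type*} [Fintype κ] {q : κ → ℝ} (hq : q ∈ stdSimplex ℝ κ) :
    PMF κ :=
  PMF.ofFintype (fun j ↦ ENNReal.ofReal (q j)) <| by
    rw [← ENNReal.ofReal_sum_of_nonneg fun j _ ↦ hq.1 j, hq.2, ENNReal.ofReal_one]

lemma PMF.integral_ofStdSimplex {κ : Type*} [Fintype κ] [MeasurableSpace κ]
    [MeasurableSingletonClass κ] {q : κ → ℝ} (hq : q ∈ stdSimplex ℝ κ) (f : κ → ℝ) :
    ∫ j, f j ∂(ofStdSimplex hq).toMeasure = ∑ j, q j * f j := by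
  simp [integral_eq_sum, ofStdSimplex, ENNReal.toReal_ofReal (hq.1 _)]

lemma mul_exp_neg_le_one_of_log_le {r x : ℝ} (h : log r ≤ x) : r * exp (-x) ≤ 1 := by
  rw [exp_neg, ← div_eq_mul_inv, div_le_one (exp_pos x)]
  exact (le_exp_log r).trans (exp_le_exp.2 h)

theorem simple_minmax_col_general (r c : ℕ) (hc : 0 < c)
    (M : Fin r → Fin c → ℝ) (hM : ∀ i j, M i j ∈ Set.Icc (0 : ℝ) 1)
    (ε : ℝ) (hε : 0 < ε) (k : ℕ) (hk : 0 < k)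
    (hkr : Real.log r / (2 * ε ^ 2) ≤ k) :
    ∃ T : Fin k → Fin c, ∀ i : Fin r,
      (⨆ q : stdSimplex ℝ (Fin c), ⨅ i' : Fin r, ∑ j, q.1 j * M i' j) - ε ≤
        (1 / k : ℝ) * ∑ m, M i (T m) := by
  have : NeZero c := ⟨hc.ne'⟩
  obtain ⟨q, hq, hv⟩ := exists_mem_stdSimplex_forall_iSup_le M
  have hcard : Fintype.card (Fin r) * exp (-2 * k * ε ^ 2) ≤ 1 := by
    rw [Fintype.card_fin, show -2 * (k : ℝ) * ε ^ 2 = -(2 * k * ε ^ 2) by ring]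
    rw [div_le_iff₀ (by positivity)] at hkr
    exact mul_exp_neg_le_one_of_log_le (by linarith)
  obtain ⟨T, hT⟩ :=
    exists_forall_mul_integral_sub_le_sum (PMF.ofStdSimplex hq).toMeasure hM hk hε hcard
  simp only [PMF.integral_ofStdSimplex] at hT
  refine ⟨T, fun i ↦ ?_⟩
  have hk' : (0 : ℝ) < k := Nat.cast_pos.2 hk
  rw [one_div, inv_mul_eq_div, le_div_iff₀ hk', mul_comm]
  have := mul_le_mul_of_nonneg_left (sub_le_sub_right (hv i) ε) hk'.le
  linarith [hT i]

theorem simple_minmax_col (r c : ℕ) (hr : 0 < r) (hc : 0 < c)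
    (M : Fin r → Fin c → ℝ) (hM : ∀ i j, M i j ∈ Set.Icc (0 : ℝ) 1)
    (ε : ℝ) (hε : 0 < ε) (k : ℕ) (hk : 0 < k)
    (hkr : Real.log r / (2 * ε ^ 2) ≤ k) :
    ∃ T : Fin k → Fin c, ∀ i : Fin r,
      (⨆ q : stdSimplex ℝ (Fin c), ⨅ i' : Fin r, ∑ j, q.1 j * M i' j) - ε ≤
        (1 / k : ℝ) * ∑ m, M i (T m) :=
  simple_minmax_col_general r c hc M hM ε hε k hk hkr
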